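/- arXiv:2203.10745 — 6 statements merged into one kernel-verified Lean document; each statement's English description precedes it below -/
import Mathlib

section
/- Let λ = 2cos(π/q) for an integer q ≥ 3, and let A = [[1, λ],[0,1]], B = [[1,0],[-λ,1]], J = [[0,-1],[1,0]] in SL(2,ℝ). Then J = (AB)^(q(q-1)/2) · A⁻¹ · (AB)^((q+1)/2). -/
open Matrix Real

theorem stmt_0 (q : ℕ) (hq : 3 ≤ q) (hodd : Odd q)
    (l : ℝ) (hl : l = 2 * Real.cos (π / q))
    (A B J : Matrix (Fin 2) (Fin 2) ℝ)
    (hA : A = !![1, l; 0, 1]) (hB : B = !![1, 0; -l, 1])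
    (hJ : J = !![0, -1; 1, 0]) :
    J = (A * B) ^ (q * (q - 1) / 2) * A⁻¹ * (A * B) ^ ((q + 1) / 2) := by
  obtain ⟨k, hk⟩ := hodd
  subst hk
  have hk1 : 1 ≤ k := by omega
  have hcast : ((2 * k + 1 : ℕ) : ℝ) = 2 * (k : ℝ) + 1 := by push_cast; ring
  set α : ℝ := π / (2 * (k : ℝ) + 1) with hα
  have hkR : (1 : ℝ) ≤ (k : ℝ) := by exact_mod_cast hk1
  have hq0 : (0 : ℝ) < 2 * (k : ℝ) + 1 := by linarith
  have hq0' : (2 * (k : ℝ) + 1) ≠ 0 := ne_of_gt hq0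
  have hπ := Real.pi_pos
  have hαpos : 0 < α := by rw [hα]; positivity
  have hα2 : 2 * α < π := by
    rw [hα, mul_div_assoc', div_lt_iff₀ hq0]
    nlinarith
  have hl' : l = 2 * Real.cos α := by rw [hl, hcast, hα]
  have hsα : 0 < Real.sin α := Real.sin_pos_of_pos_of_lt_pi hαpos (by linarith)
  have hs2α : 0 < Real.sin (2 * α) := Real.sin_pos_of_pos_of_lt_pi (by linarith) hα2
  have hs2ne : Real.sin (2 * α) ≠ 0 := ne_of_gt hs2α
  have hcα : 0 < Real.cos α := Real.cos_pos_of_mem_Ioo ⟨by linarith, by linarith⟩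
  have hlpos : 0 < l := by rw [hl']; linarith
  have hlne : l ≠ 0 := ne_of_gt hlpos
  have hs2eq : Real.sin (2 * α) = l * Real.sin α := by
    rw [Real.sin_two_mul, hl']; ring
  set M : Matrix (Fin 2) (Fin 2) ℝ := A * B with hMdef
  have hM : M = !![1 - l ^ 2, l; -l, 1] := by
    rw [hMdef, hA, hB]
    ext i j
    fin_cases i <;> fin_cases j <;>
      simp [Matrix.mul_apply, Fin.sum_univ_succ] <;> ring
  have hM2 : M * M = (2 - l ^ 2) • M - 1 := by
    rw [hM]
    ext i j
    fin_cases i <;> fin_cases j <;>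
      simp [Matrix.mul_apply, Fin.sum_univ_succ, Matrix.one_apply] <;> ring
  have key : ∀ n : ℕ, M ^ n =
      ((-1 : ℝ) ^ (n + 1) * Real.sin (2 * n * α) / Real.sin (2 * α)) • M +
      ((-1 : ℝ) ^ (n + 1) * Real.sin (2 * n * α - 2 * α) / Real.sin (2 * α)) •
        (1 : Matrix (Fin 2) (Fin 2) ℝ) := by
    intro n
    induction n with
    | zero =>
      have h0 : Real.sin (2 * (0 : ℕ) * α - 2 * α) = -Real.sin (2 * α) := by
        norm_num
      rw [pow_zero]
      push_cast
      rw [show (2 : ℝ) * 0 * α - 2 * α = -(2 * α) by ring, Real.sin_neg]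
      norm_num
      rw [div_self hs2ne, one_smul]
    | succ n ih =>
      rw [pow_succ, ih, add_mul, smul_mul_assoc, smul_mul_assoc, one_mul, hM2]
      have hc : (-1 : ℝ) ^ (n + 1 + 1) * Real.sin (2 * (n + 1 : ℕ) * α) / Real.sin (2 * α) =
          ((-1 : ℝ) ^ (n + 1) * Real.sin (2 * n * α) / Real.sin (2 * α)) * (2 - l ^ 2) +
          (-1 : ℝ) ^ (n + 1) * Real.sin (2 * n * α - 2 * α) / Real.sin (2 * α) := by
        push_cast
        rw [div_mul_eq_mul_div, ← add_div, div_eq_div_iff hs2ne hs2ne]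
        rw [show (2 : ℝ) * ((n : ℝ) + 1) * α = 2 * n * α + 2 * α by ring,
          Real.sin_add, Real.sin_sub, Real.sin_two_mul, Real.cos_two_mul, hl']
        ring
      have hd : (-1 : ℝ) ^ (n + 1 + 1) * Real.sin (2 * (n + 1 : ℕ) * α - 2 * α) / Real.sin (2 * α) =
          -((-1 : ℝ) ^ (n + 1) * Real.sin (2 * n * α) / Real.sin (2 * α)) := by
        push_cast
        rw [show (2 : ℝ) * ((n : ℝ) + 1) * α - 2 * α = 2 * n * α by ring]
        ring
      rw [hc, hd]
      module
  have e1 : (2 * k + 1) * (2 * k + 1 - 1) / 2 = (2 * k + 1) * k := by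
    have h : (2 * k + 1) * (2 * k + 1 - 1) = 2 * ((2 * k + 1) * k) := by
      rw [Nat.add_sub_cancel]; ring
    rw [h, Nat.mul_div_cancel_left _ (by norm_num)]
  have e2 : (2 * k + 1 + 1) / 2 = k + 1 := by omega
  -- first power
  have hang1 : 2 * (((2 * k + 1) * k : ℕ) : ℝ) * α = ((2 * k : ℕ) : ℝ) * π := by
    rw [hα]; push_cast; field_simp
  have hang2 : 2 * (((2 * k + 1) * k : ℕ) : ℝ) * α - 2 * α = ((k : ℕ) : ℝ) * (2 * π) - 2 * α := by
    rw [hα]; push_cast; field_simp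
  have hsin1 : Real.sin (2 * (((2 * k + 1) * k : ℕ) : ℝ) * α) = 0 := by
    rw [hang1, Real.sin_nat_mul_pi]
  have hsin2 : Real.sin (2 * (((2 * k + 1) * k : ℕ) : ℝ) * α - 2 * α) = -Real.sin (2 * α) := by
    rw [hang2, Real.sin_sub, Real.cos_nat_mul_two_pi,
      show ((k : ℕ) : ℝ) * (2 * π) = ((2 * k : ℕ) : ℝ) * π by push_cast; ring,
      Real.sin_nat_mul_pi]
    ring
  have hpar : ((-1 : ℝ)) ^ ((2 * k + 1) * k) = (-1 : ℝ) ^ k := by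
    rcases Nat.even_or_odd k with h | h
    · rw [(h.mul_left _).neg_one_pow, h.neg_one_pow]
    · rw [(Odd.mul ⟨k, by ring⟩ h).neg_one_pow, h.neg_one_pow]
  have hP1 : M ^ ((2 * k + 1) * k) = ((-1 : ℝ) ^ k) • (1 : Matrix (Fin 2) (Fin 2) ℝ) := by
    rw [key, hsin1, hsin2]
    rw [pow_succ, hpar]
    field_simp
    simp
  -- second power
  have hang3 : 2 * ((k + 1 : ℕ) : ℝ) * α = α + π := by
    rw [hα]; push_cast; field_simp; ring
  have hang4 : 2 * ((k + 1 : ℕ) : ℝ) * α - 2 * α = π - α := by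
    rw [hα]; push_cast; field_simp; ring
  have hsin3 : Real.sin (2 * ((k + 1 : ℕ) : ℝ) * α) = -Real.sin α := by
    rw [hang3, Real.sin_add_pi]
  have hsin4 : Real.sin (2 * ((k + 1 : ℕ) : ℝ) * α - 2 * α) = Real.sin α := by
    rw [hang4, Real.sin_pi_sub]
  have hP2 : M ^ (k + 1) = ((-1 : ℝ) ^ k) • !![l, -1; (1 : ℝ), 0] := by
    rw [key, hsin3, hsin4, hM, hs2eq]
    ext i j
    fin_cases i <;> fin_cases j <;>
      · simp [Matrix.one_apply, pow_succ]
        field_simp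
        try ring
  have hAinv : A⁻¹ = !![1, -l; 0, 1] := by
    apply inv_eq_right_inv
    rw [hA]
    ext i j
    fin_cases i <;> fin_cases j <;>
      simp [Matrix.mul_apply, Fin.sum_univ_succ, Matrix.one_apply]
  rw [e1, e2, hP1, hP2, hAinv, hJ]
  rw [Matrix.smul_mul, Matrix.mul_smul, Matrix.one_mul, Matrix.smul_mul, smul_smul,
    ← pow_add, Even.neg_one_pow ⟨k, by ring⟩, one_smul]
  ext i j
  fin_cases i <;> fin_cases j <;>
    simp [Matrix.mul_apply, Fin.sum_univ_succ]
end

section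
/- Let λ = 2cos(π/q) for an integer q ≥ 3, and let A = [[1, λ],[0,1]], B = [[1,0],[-λ,1]] in SL(2,ℝ). Then (AB)^q = -I and consequently J² = -I where J = (AB)^(q(q-1)/2) A⁻¹ (AB)^((q+1)/2). -/
open Matrix Real

set_option maxHeartbeats 1000000 in
theorem stmt_1 (q : ℕ) (hq : 3 ≤ q) (hodd : Odd q)
    (l : ℝ) (hl : l = 2 * Real.cos (π / q))
    (A B : Matrix (Fin 2) (Fin 2) ℝ)
    (hA : A = !![1, l; 0, 1]) (hB : B = !![1, 0; -l, 1]) :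
    (A * B) ^ q = -1 ∧
      ((A * B) ^ (q * (q - 1) / 2) * A⁻¹ * (A * B) ^ ((q + 1) / 2)) ^ 2 = -1 := by
  obtain ⟨m, hm⟩ := hodd
  have hm1 : 1 ≤ m := by omega
  have hq0 : (0:ℝ) < (q : ℝ) := by positivity
  have hqne : (q : ℝ) ≠ 0 := ne_of_gt hq0
  obtain ⟨θ, hθ⟩ : ∃ θ : ℝ, θ = π - 2 * π / q := ⟨_, rfl⟩
  -- sin θ
  have hsinθ : Real.sin θ = Real.sin (2 * π / q) := by rw [hθ, Real.sin_pi_sub]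
  have hsinθpos : 0 < Real.sin θ := by
    rw [hsinθ]
    apply Real.sin_pos_of_pos_of_lt_pi
    · positivity
    · rw [div_lt_iff₀ hq0]
      have h3 : (3:ℝ) ≤ (q:ℝ) := by exact_mod_cast hq
      nlinarith [Real.pi_pos]
  have hsne : Real.sin θ ≠ 0 := ne_of_gt hsinθpos
  -- trace identity
  have htrace : 2 * Real.cos θ = 2 - l ^ 2 := by
    have h2 : Real.cos (2 * π / q) = 2 * Real.cos (π / q) ^ 2 - 1 := by
      have := Real.cos_two_mul (π / q)
      rw [show 2 * π / (q:ℝ) = 2 * (π / q) by ring]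
      exact this
    rw [hθ, Real.cos_pi_sub, h2, hl]; ring
  -- Chebyshev-like sequence
  obtain ⟨c, hc⟩ : ∃ c : ℕ → ℝ, c = fun n : ℕ => Real.sin ((n : ℝ) * θ) / Real.sin θ := ⟨_, rfl⟩
  have hc0 : c 0 = 0 := by simp [hc]
  have hc1 : c 1 = 1 := by simp [hc, div_self hsne]
  have hcrec : ∀ n : ℕ, c (n + 2) = (2 - l ^ 2) * c (n + 1) - c n := by
    intro n
    have hs2 : Real.sin ((n + 2 : ℕ) * θ) =
        (2 * Real.cos θ) * Real.sin ((n + 1 : ℕ) * θ) - Real.sin (n * θ) := by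
      have e1 : ((n + 2 : ℕ) : ℝ) * θ = ((n + 1 : ℕ) : ℝ) * θ + θ := by push_cast; ring
      have e2 : ((n : ℕ) : ℝ) * θ = ((n + 1 : ℕ) : ℝ) * θ - θ := by push_cast; ring
      rw [e1, e2, Real.sin_add, Real.sin_sub]; ring
    simp only [hc]
    rw [hs2, htrace]
    field_simp
    try ring
  set M : Matrix (Fin 2) (Fin 2) ℝ := A * B with hMdef
  have hM : M = !![1 - l ^ 2, l; -l, 1] := by
    rw [hMdef, hA, hB]
    ext i j
    fin_cases i <;> fin_cases j <;>
      simp [Matrix.mul_apply, Fin.sum_univ_succ] <;> ring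
  have hM2 : M ^ 2 = (2 - l ^ 2) • M - 1 := by
    rw [hM]
    ext i j
    fin_cases i <;> fin_cases j <;>
      simp [pow_two, Matrix.mul_apply, Fin.sum_univ_succ, Matrix.one_apply] <;> ring
  have key : ∀ n : ℕ, M ^ (n + 1) = c (n + 1) • M - c n • 1 := by
    intro n
    induction n with
    | zero => simp [hc0, hc1]
    | succ n ih =>
      rw [pow_succ, ih, sub_mul, Matrix.smul_mul, Matrix.smul_mul, one_mul, ← pow_two, hM2,
        hcrec n]
      rw [smul_sub, smul_smul]
      module
  -- values of c
  have hqθ : (q : ℝ) * θ = ((q : ℤ) - 2 : ℤ) * π := by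
    rw [hθ]; push_cast; field_simp
  have hcosqθ : Real.cos ((q : ℝ) * θ) = -1 := by
    rw [hqθ]
    have : ((q : ℤ) - 2 : ℤ) = 2 * (m : ℤ) - 1 := by push_cast [hm]; ring
    rw [this]
    push_cast
    rw [show (2 * (m:ℝ) - 1) * π = (m:ℝ) * (2 * π) - π by ring]
    exact_mod_cast Real.cos_nat_mul_two_pi_sub_pi m
  have hsinqθ : Real.sin ((q : ℝ) * θ) = 0 := by
    rw [hqθ]; exact Real.sin_int_mul_pi _
  have hcq : c q = 0 := by simp [hc, hsinqθ]
  have hcq1 : c (q - 1) = 1 := by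
    have e : ((q - 1 : ℕ) : ℝ) * θ = (q : ℝ) * θ - θ := by
      have : ((q - 1 : ℕ) : ℝ) = (q : ℝ) - 1 := by
        push_cast [Nat.cast_sub (by omega : 1 ≤ q)]; ring
      rw [this]; ring
    simp only [hc]
    rw [e, Real.sin_sub, hsinqθ, hcosqθ]
    rw [div_eq_one_iff_eq hsne]; ring
  have hMq : M ^ q = -1 := by
    have : M ^ ((q - 1) + 1) = c ((q - 1) + 1) • M - c (q - 1) • 1 := key (q - 1)
    rw [show (q - 1) + 1 = q by omega] at this
    rw [this, hcq, hcq1]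
    simp
  refine ⟨hMq, ?_⟩
  -- Part 2
  have hAinv : A⁻¹ = !![1, -l; 0, 1] := by
    apply Matrix.inv_eq_right_inv
    rw [hA]
    ext i j
    fin_cases i <;> fin_cases j <;>
      simp [Matrix.mul_apply, Fin.sum_univ_succ, Matrix.one_apply]
  -- c (m+1) = c m
  have hkey2 : Real.sin (((m + 1 : ℕ) : ℝ) * θ) = Real.sin (((m : ℕ) : ℝ) * θ) := by
    have e : ((m : ℕ) : ℝ) * θ = (q : ℝ) * θ - ((m + 1 : ℕ) : ℝ) * θ := by
      push_cast [hm]; ring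
    rw [e, Real.sin_sub, hsinqθ, hcosqθ]; ring
  have hcm : c (m + 1) = c m := by simp only [hc]; rw [hkey2]
  -- c(m+1)^2 * l^2 = 1
  have hsin_m1 : Real.sin (((m + 1 : ℕ) : ℝ) * θ) ^ 2 = Real.sin (π / q) ^ 2 := by
    have e : ((m + 1 : ℕ) : ℝ) * θ = (m : ℝ) * π - π / q := by
      rw [hθ]; push_cast
      have hqr : (q : ℝ) = 2 * m + 1 := by exact_mod_cast congrArg Nat.cast hm
      field_simp [hqr]; rw [hqr]; ring
    rw [e, Real.sin_sub]
    have h0 : Real.sin ((m : ℝ) * π) = 0 := by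
      exact_mod_cast Real.sin_int_mul_pi (m : ℤ)
    have h1 : Real.cos ((m : ℝ) * π) ^ 2 = 1 := by
      have := Real.sin_sq_add_cos_sq ((m : ℝ) * π)
      rw [h0] at this; nlinarith
    rw [h0]
    linear_combination Real.sin (π / q) ^ 2 * h1
  have hsinθ2 : Real.sin θ ^ 2 = Real.sin (π / q) ^ 2 * l ^ 2 := by
    rw [hsinθ, show 2 * π / (q : ℝ) = 2 * (π / q) by ring, Real.sin_two_mul, hl]
    ring
  have hs1 : c (m + 1) ^ 2 * l ^ 2 = 1 := by
    simp only [hc]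
    rw [div_pow, hsin_m1, div_mul_eq_mul_div, ← hsinθ2, div_self (by positivity)]
  -- the element X
  have hAinvM : A⁻¹ * M = B := by
    rw [hMdef, ← mul_assoc, hAinv, hA]
    have : (!![1, -l; 0, 1] : Matrix (Fin 2) (Fin 2) ℝ) * !![1, l; 0, 1] = 1 := by
      ext i j
      fin_cases i <;> fin_cases j <;>
        simp [Matrix.mul_apply, Fin.sum_univ_succ, Matrix.one_apply]
    rw [this, one_mul]
  have hX : A⁻¹ * M ^ (m + 1) = c (m + 1) • (B - A⁻¹) := by
    rw [key m, Matrix.mul_sub, Matrix.mul_smul, Matrix.mul_smul, mul_one, hAinvM,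
      ← hcm, smul_sub]
  have hX2 : (A⁻¹ * M ^ (m + 1)) ^ 2 = -1 := by
    rw [hX, pow_two, smul_mul_smul_comm]
    have hBA : (B - A⁻¹) * (B - A⁻¹) = (-(l ^ 2)) • 1 := by
      rw [hB, hAinv]
      ext i j
      fin_cases i <;> fin_cases j <;>
        simp [Matrix.mul_apply, Fin.sum_univ_succ, Matrix.one_apply,
          Matrix.sub_apply] <;> ring
    rw [hBA, smul_smul]
    rw [show c (m + 1) * c (m + 1) * -(l ^ 2) = -(c (m + 1) ^ 2 * l ^ 2) by ring, hs1]
    simp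
  -- put together
  have e1 : q * (q - 1) / 2 = q * m := by
    rw [show q - 1 = 2 * m by omega, show q * (2 * m) = q * m * 2 by ring,
      Nat.mul_div_cancel _ (by norm_num)]
  have e2 : (q + 1) / 2 = m + 1 := by omega
  rw [e1, e2, pow_mul, hMq]
  have hcomm : Commute ((-1 : Matrix (Fin 2) (Fin 2) ℝ) ^ m) (A⁻¹ * M ^ (m + 1)) :=
    (Commute.neg_one_left _).pow_left m
  calc ((-1 : Matrix (Fin 2) (Fin 2) ℝ) ^ m * A⁻¹ * M ^ (m + 1)) ^ 2
      = ((-1) ^ m * (A⁻¹ * M ^ (m + 1))) ^ 2 := by rw [mul_assoc]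
    _ = ((-1) ^ m) ^ 2 * (A⁻¹ * M ^ (m + 1)) ^ 2 := (hcomm.mul_pow 2).symm ▸ rfl
    _ = (A⁻¹ * M ^ (m + 1)) ^ 2 := by
        rw [← pow_mul, show m * 2 = 2 * m by ring, pow_mul, neg_one_sq, one_pow, one_mul]
    _ = -1 := hX2
end

section
/- Let λ = 2cos(π/q) for q ≥ 3, A = [[1,λ],[0,1]], J = [[0,-1],[1,0]]. Then (AJ)² = -AB where B = [[1,0],[-λ,1]], and the element AJ has order 2q in SL(2,ℝ) when q is odd. -/
open Matrix Real

theorem stmt_2 (q : ℕ) (hq : 3 ≤ q) (hodd : Odd q)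
    (l : ℝ) (hl : l = 2 * Real.cos (π / q))
    (A B J : Matrix (Fin 2) (Fin 2) ℝ)
    (hA : A = !![1, l; 0, 1]) (hB : B = !![1, 0; -l, 1])
    (hJ : J = !![0, -1; 1, 0]) :
    (A * J) ^ 2 = -(A * B) ∧
      (A * J) ^ (2 * q) = 1 ∧ ∀ n : ℕ, 0 < n → n < 2 * q → (A * J) ^ n ≠ 1 := by
  have hq0 : (0:ℝ) < (q:ℝ) := by positivity
  set θ : ℝ := π / q with hθ
  have hθpos : 0 < θ := by positivity
  have hθlt : θ < π := by
    rw [hθ]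
    apply div_lt_self Real.pi_pos
    exact_mod_cast by omega
  have hsθ : Real.sin θ ≠ 0 := ne_of_gt (Real.sin_pos_of_pos_of_lt_pi hθpos hθlt)
  have hqθ : (q:ℝ) * θ = π := by
    rw [hθ]; field_simp
  set s : ℕ → ℝ := fun n => Real.sin (n * θ) / Real.sin θ with hs
  have hs0 : s 0 = 0 := by simp [hs]
  have hs1 : s 1 = 1 := by
    simp only [hs, Nat.cast_one, one_mul]
    field_simp
  have hcos : Real.cos θ = Real.cos (π / q) := by rw [hθ]
  have hs2 : s 2 = l := by
    simp only [hs, Nat.cast_ofNat]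
    rw [show (2:ℝ) * θ = 2 * θ from rfl, Real.sin_two_mul, hl, ← hcos]
    field_simp
  have hrec : ∀ n : ℕ, s (n + 2) = l * s (n + 1) - s n := by
    intro n
    simp only [hs]
    push_cast
    have h1 : ((n:ℝ) + 2) * θ = (((n:ℝ) + 1) * θ) + θ := by ring
    have h2 : (n:ℝ) * θ = (((n:ℝ) + 1) * θ) - θ := by ring
    rw [h1, h2, Real.sin_add, Real.sin_sub, hl, ← hcos]
    field_simp
    ring
  set M := A * J with hM
  have hMval : M = !![l, -1; 1, 0] := by
    rw [hM, hA, hJ]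
    ext i j
    fin_cases i <;> fin_cases j <;>
      simp [Matrix.mul_apply, Fin.sum_univ_two]
  have key : ∀ n : ℕ, M ^ (n + 1) = !![s (n + 2), -(s (n + 1)); s (n + 1), -(s n)] := by
    intro n
    induction n with
    | zero =>
      rw [pow_one, hMval, hs2, hs1, hs0]
      norm_num
    | succ m ih =>
      rw [pow_succ, ih, hMval]
      ext i j
      fin_cases i <;> fin_cases j <;>
        simp [Matrix.mul_apply, Fin.sum_univ_two, hrec] <;> ring
  refine ⟨?_, ?_, ?_⟩
  · -- (A*J)^2 = -(A*B)
    have := key 1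
    rw [show (1:ℕ) + 1 = 2 from rfl] at this
    have h3 : s (1 + 2) = l * l - 1 := by
      rw [hrec 1, show (1:ℕ) + 1 = 2 from rfl, hs2, hs1]
    rw [this, h3, hs2, hs1, hA, hB]
    ext i j
    fin_cases i <;> fin_cases j <;>
      simp [Matrix.mul_apply, Fin.sum_univ_two] <;> ring
  · -- order divides 2q
    have h2q : 2 * q = (2 * q - 1) + 1 := by omega
    rw [h2q, key]
    have e1 : ((2 * q - 1 + 2 : ℕ) : ℝ) * θ = 2 * π + θ := by
      push_cast [Nat.cast_sub (by omega : 1 ≤ 2*q)]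
      rw [show ((2:ℝ) * q - 1 + 2) * θ = 2 * ((q:ℝ) * θ) + θ by ring, hqθ]
    have e2 : ((2 * q - 1 + 1 : ℕ) : ℝ) * θ = 2 * π := by
      push_cast [Nat.cast_sub (by omega : 1 ≤ 2*q)]
      rw [show ((2:ℝ) * q - 1 + 1) * θ = 2 * ((q:ℝ) * θ) by ring, hqθ]
    have e3 : ((2 * q - 1 : ℕ) : ℝ) * θ = 2 * π - θ := by
      push_cast [Nat.cast_sub (by omega : 1 ≤ 2*q)]
      rw [show ((2:ℝ) * q - 1) * θ = 2 * ((q:ℝ) * θ) - θ by ring, hqθ]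
    have v1 : s (2 * q - 1 + 2) = 1 := by
      simp only [hs, e1]
      rw [Real.sin_add, Real.sin_two_pi, Real.cos_two_pi]
      field_simp; ring
    have v2 : s (2 * q - 1 + 1) = 0 := by
      simp only [hs, e2, Real.sin_two_pi, zero_div]
    have v3 : s (2 * q - 1) = -1 := by
      simp only [hs, e3]
      rw [Real.sin_sub, Real.sin_two_pi, Real.cos_two_pi]
      field_simp; ring
    rw [v1, v2, v3]
    ext i j
    fin_cases i <;> fin_cases j <;> simp [Matrix.one_apply]
  · -- minimality
    intro n hn0 hn2q hMn
    obtain ⟨m, rfl⟩ : ∃ m, n = m + 1 := ⟨n - 1, by omega⟩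
    rw [key] at hMn
    have h10 : s (m + 1) = 0 := by
      have := congrFun (congrFun hMn 1) 0
      simpa [Matrix.one_apply] using this
    have hsin : Real.sin (((m:ℝ) + 1) * θ) = 0 := by
      have h2 := h10
      simp only [hs] at h2
      push_cast at h2
      exact (div_eq_zero_iff.mp h2).resolve_right hsθ
    rw [Real.sin_eq_zero_iff] at hsin
    obtain ⟨k, hk⟩ := hsin
    have hkq : (k : ℝ) * (q : ℝ) = (m : ℝ) + 1 := by
      have hπ : (0:ℝ) < π := Real.pi_pos
      have h4 : (k : ℝ) * π = ((m : ℝ) + 1) * (π / q) := by rw [hk, hθ]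
      have hqne : (q:ℝ) ≠ 0 := ne_of_gt hq0
      field_simp at h4
      nlinarith [h4]
    have hkq' : k * (q : ℤ) = (m : ℤ) + 1 := by exact_mod_cast hkq
    have hkval : k = 1 := by
      have hq' : (3 : ℤ) ≤ q := by exact_mod_cast hq
      have h2 : (m : ℤ) + 1 < 2 * q := by exact_mod_cast hn2q
      nlinarith [hkq']
    have hnq : m + 1 = q := by
      rw [hkval, one_mul] at hkq'
      omega
    have h11 : -(s m) = 1 := by
      have := congrFun (congrFun hMn 1) 1
      simpa [Matrix.one_apply] using this
    have hm : (m : ℝ) * θ = π - θ := by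
      have : ((m : ℝ) + 1) * θ = π := by
        rw [show ((m:ℝ) + 1) = ((q:ℕ):ℝ) by exact_mod_cast congrArg (Nat.cast : ℕ → ℝ) hnq]
        exact hqθ
      linarith [this]
    have : s m = 1 := by
      simp only [hs, hm, Real.sin_pi_sub]
      field_simp
    rw [this] at h11
    norm_num at h11
end

section
/- If λ = 2cos(π/q) ≥ 2 (i.e. formally, for any real λ ≥ 2), the matrices A = [[1,λ],[0,1]] and B = [[1,0],[-λ,1]] generate a free group of rank 2 in SL(2,ℝ). -/
open Matrix

namespace Stmt4Aux

/-- the four generator matrices: A, A⁻¹, B, B⁻¹ -/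
def gmat (l : ℝ) : Bool × Bool → Matrix (Fin 2) (Fin 2) ℝ
  | (true, true) => !![1, l; 0, 1]
  | (true, false) => !![1, -l; 0, 1]
  | (false, true) => !![1, 0; -l, 1]
  | (false, false) => !![1, 0; l, 1]

def sg : Bool → ℝ := fun s => if s then 1 else -1

/-- ping-pong invariant, indexed by the leftmost letter of the word applied so far -/
def Inv : Bool × Bool → (Fin 2 → ℝ) → Prop
  | (true, s), u => |u 1| + 1 ≤ |u 0| ∧ 0 ≤ sg s * (u 0 * u 1) ∧ 1 ≤ |u 1|
  | (false, s), u => |u 0| + 1 ≤ |u 1| ∧ sg s * (u 0 * u 1) ≤ 0 ∧ 1 ≤ |u 0|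

def startVec : Bool × Bool → (Fin 2 → ℝ)
  | (true, _) => ![0, 1]
  | (false, _) => ![1, 0]

-- real arithmetic step lemmas
lemma stepA_fromA {l e x y : ℝ} (hl : 2 ≤ l) (he : e = 1 ∨ e = -1)
    (h1 : |y| + 1 ≤ |x|) (h2 : 0 ≤ e * (x * y)) (h3 : 1 ≤ |y|) :
    |y| + 1 ≤ |x + e * l * y| ∧ 0 ≤ e * ((x + e * l * y) * y) := by
  rcases abs_cases x with ⟨hx, hx'⟩ | ⟨hx, hx'⟩ <;>
  rcases abs_cases y with ⟨hy, hy'⟩ | ⟨hy, hy'⟩ <;>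
  rcases abs_cases (x + e * l * y) with ⟨hz, hz'⟩ | ⟨hz, hz'⟩ <;>
  rcases he with rfl | rfl <;>
  constructor <;> nlinarith

lemma stepA_fromB {l e x y : ℝ} (hl : 2 ≤ l) (he : e = 1 ∨ e = -1)
    (h1 : |x| + 1 ≤ |y|) :
    |y| + 1 ≤ |x + e * l * y| ∧ 0 ≤ e * ((x + e * l * y) * y) := by
  rcases abs_cases x with ⟨hx, hx'⟩ | ⟨hx, hx'⟩ <;>
  rcases abs_cases y with ⟨hy, hy'⟩ | ⟨hy, hy'⟩ <;>
  rcases abs_cases (x + e * l * y) with ⟨hz, hz'⟩ | ⟨hz, hz'⟩ <;>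
  rcases he with rfl | rfl <;>
  constructor <;> nlinarith

lemma stepB_fromB {l e x y : ℝ} (hl : 2 ≤ l) (he : e = 1 ∨ e = -1)
    (h1 : |x| + 1 ≤ |y|) (h2 : e * (x * y) ≤ 0) (h3 : 1 ≤ |x|) :
    |x| + 1 ≤ |y - e * l * x| ∧ e * (x * (y - e * l * x)) ≤ 0 := by
  rcases abs_cases x with ⟨hx, hx'⟩ | ⟨hx, hx'⟩ <;>
  rcases abs_cases y with ⟨hy, hy'⟩ | ⟨hy, hy'⟩ <;>
  rcases abs_cases (y - e * l * x) with ⟨hz, hz'⟩ | ⟨hz, hz'⟩ <;>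
  rcases he with rfl | rfl <;>
  constructor <;> nlinarith

lemma stepB_fromA {l e x y : ℝ} (hl : 2 ≤ l) (he : e = 1 ∨ e = -1)
    (h1 : |y| + 1 ≤ |x|) :
    |x| + 1 ≤ |y - e * l * x| ∧ e * (x * (y - e * l * x)) ≤ 0 := by
  rcases abs_cases x with ⟨hx, hx'⟩ | ⟨hx, hx'⟩ <;>
  rcases abs_cases y with ⟨hy, hy'⟩ | ⟨hy, hy'⟩ <;>
  rcases abs_cases (y - e * l * x) with ⟨hz, hz'⟩ | ⟨hz, hz'⟩ <;>
  rcases he with rfl | rfl <;>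
  constructor <;> nlinarith

end Stmt4Aux

namespace Stmt4Aux

lemma sg_cases (s : Bool) : sg s = 1 ∨ sg s = -1 := by cases s <;> simp [sg]

lemma mulVec_gmat_A (l : ℝ) (s : Bool) (u : Fin 2 → ℝ) :
    (gmat l (true, s)).mulVec u = ![u 0 + sg s * l * u 1, u 1] := by
  cases s <;> funext i <;> fin_cases i <;>
    simp [gmat, sg, Matrix.mulVec, dotProduct, Fin.sum_univ_two]

lemma mulVec_gmat_B (l : ℝ) (s : Bool) (u : Fin 2 → ℝ) :
    (gmat l (false, s)).mulVec u = ![u 0, u 1 - sg s * l * u 0] := by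
  cases s <;> funext i <;> fin_cases i <;>
    simp [gmat, sg, Matrix.mulVec, dotProduct, Fin.sum_univ_two] <;> ring

lemma inv_true (s : Bool) (a b : ℝ) (h1 : |b| + 1 ≤ |a|) (h2 : 0 ≤ sg s * (a * b))
    (h3 : 1 ≤ |b|) : Inv (true, s) ![a, b] := by
  refine ⟨?_, ?_, ?_⟩ <;> simpa

lemma inv_false (s : Bool) (a b : ℝ) (h1 : |a| + 1 ≤ |b|) (h2 : sg s * (a * b) ≤ 0)
    (h3 : 1 ≤ |a|) : Inv (false, s) ![a, b] := by
  refine ⟨?_, ?_, ?_⟩ <;> simpa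

lemma abs_sg_mul (s : Bool) (x : ℝ) : |sg s * x| = |x| := by
  rcases sg_cases s with h | h <;> rw [h] <;> simp

lemma key (l : ℝ) (hl : 2 ≤ l) :
    ∀ (L : List (Bool × Bool)) (p : Bool × Bool),
      (∀ L₂ x b L₃, p :: L ≠ L₂ ++ (x, b) :: (x, !b) :: L₃) →
      Inv p ((((p :: L).map (gmat l)).prod).mulVec
        (startVec ((p :: L).getLast (List.cons_ne_nil _ _)))) := by
  intro L
  induction L with
  | nil =>
    intro p _
    obtain ⟨b, s⟩ := p
    have h2 : (2:ℝ) ≤ |sg s * l| := by rw [abs_sg_mul]; rw [abs_of_nonneg (by linarith)]; exact hl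
    have hsq : sg s * sg s = 1 := by rcases sg_cases s with h | h <;> rw [h] <;> norm_num
    simp only [List.map_cons, List.map_nil, List.prod_cons, List.prod_nil, mul_one,
      List.getLast_singleton]
    cases b
    · show Inv (false, s) ((gmat l (false, s)).mulVec ![1, 0])
      rw [mulVec_gmat_B]
      simp only [Matrix.cons_val_zero, Matrix.cons_val_one, Matrix.head_cons]
      refine inv_false s 1 (0 - sg s * l * 1) ?_ (by nlinarith) (by norm_num)
      · rw [show (0 - sg s * l * 1 : ℝ) = -(sg s * l) by ring, abs_neg]
        simpa using by linarith [abs_mul (sg s) l]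
    · show Inv (true, s) ((gmat l (true, s)).mulVec ![0, 1])
      rw [mulVec_gmat_A]
      simp only [Matrix.cons_val_zero, Matrix.cons_val_one, Matrix.head_cons]
      refine inv_true s (0 + sg s * l * 1) 1 ?_ (by nlinarith) (by norm_num)
      · simpa using by linarith [abs_mul (sg s) l]
  | cons q L ih =>
    intro p hred
    have hredq : ∀ L₂ x b L₃, q :: L ≠ L₂ ++ (x, b) :: (x, !b) :: L₃ := by
      intro L₂ x b L₃ h
      exact hred (p :: L₂) x b L₃ (by rw [h]; rfl)
    have IH := ih q hredq
    have hlast : (p :: q :: L).getLast (List.cons_ne_nil _ _)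
        = (q :: L).getLast (List.cons_ne_nil _ _) := by
      rw [List.getLast_cons (List.cons_ne_nil _ _)]
    rw [hlast, List.map_cons, List.prod_cons, ← Matrix.mulVec_mulVec]
    set u := (((q :: L).map (gmat l)).prod).mulVec
        (startVec ((q :: L).getLast (List.cons_ne_nil _ _))) with hu
    obtain ⟨pb, ps⟩ := p
    obtain ⟨qb, qs⟩ := q
    have hsame : pb = qb → ps = qs := by
      intro h; by_contra hne
      refine hred [] pb ps L ?_
      subst h
      have hq : qs = !ps := by revert hne; clear hred hredq; cases ps <;> cases qs <;> decide
      rw [List.nil_append, hq]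
    cases pb
    · rw [mulVec_gmat_B]
      cases qb
      · have hss := hsame rfl; subst hss
        obtain ⟨i1, i2, i3⟩ := IH
        obtain ⟨c1, c2⟩ := stepB_fromB hl (sg_cases ps) i1 i2 i3
        exact inv_false ps _ _ c1 c2 i3
      · obtain ⟨i1, i2, i3⟩ := IH
        obtain ⟨c1, c2⟩ := stepB_fromA hl (sg_cases ps) i1
        exact inv_false ps _ _ c1 c2 (by linarith)
    · rw [mulVec_gmat_A]
      cases qb
      · obtain ⟨i1, i2, i3⟩ := IH
        obtain ⟨c1, c2⟩ := stepA_fromB hl (sg_cases ps) i1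
        exact inv_true ps _ _ c1 c2 (by linarith)
      · have hss := hsame rfl; subst hss
        obtain ⟨i1, i2, i3⟩ := IH
        obtain ⟨c1, c2⟩ := stepA_fromA hl (sg_cases ps) i1 i2 i3
        exact inv_true ps _ _ c1 c2 i3

end Stmt4Aux

namespace Stmt4Aux

lemma coe_prod (l : ℝ) (g : Bool × Bool → Matrix.SpecialLinearGroup (Fin 2) ℝ)
    (h : ∀ x, ((g x : Matrix.SpecialLinearGroup (Fin 2) ℝ) : Matrix (Fin 2) (Fin 2) ℝ)
      = gmat l x) (W : List (Bool × Bool)) :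
    (((W.map g).prod : Matrix.SpecialLinearGroup (Fin 2) ℝ) : Matrix (Fin 2) (Fin 2) ℝ)
      = (W.map (gmat l)).prod := by
  induction W with
  | nil => simp
  | cons x W ih => simp [h, ih]

end Stmt4Aux


theorem stmt_4 (l : ℝ) (hl : 2 ≤ l) :
    Function.Injective
      (FreeGroup.lift (fun b : Bool =>
        if b then
          (⟨!![1, l; 0, 1], by simp [Matrix.det_fin_two_of]⟩ :
            Matrix.SpecialLinearGroup (Fin 2) ℝ)
        else
          ⟨!![1, 0; -l, 1], by simp [Matrix.det_fin_two_of]⟩) :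
        FreeGroup Bool →* Matrix.SpecialLinearGroup (Fin 2) ℝ) := by
  set f : Bool → Matrix.SpecialLinearGroup (Fin 2) ℝ := fun b : Bool =>
    if b then
      (⟨!![1, l; 0, 1], by simp [Matrix.det_fin_two_of]⟩ :
        Matrix.SpecialLinearGroup (Fin 2) ℝ)
    else
      ⟨!![1, 0; -l, 1], by simp [Matrix.det_fin_two_of]⟩ with hf
  refine (injective_iff_map_eq_one _).2 ?_
  intro a ha
  by_contra hne
  have hL : a.toWord ≠ [] := fun h => hne (FreeGroup.toWord_eq_nil_iff.mp h)
  obtain ⟨p, L, hPL⟩ := List.exists_cons_of_ne_nil hL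
  have hcoe : ∀ x : Bool × Bool,
      ((cond x.2 (f x.1) (f x.1)⁻¹ : Matrix.SpecialLinearGroup (Fin 2) ℝ) :
        Matrix (Fin 2) (Fin 2) ℝ) = Stmt4Aux.gmat l x := by
    rintro ⟨b, s⟩
    cases b <;> cases s
    · rw [cond_false, Matrix.SpecialLinearGroup.coe_inv]
      simp [hf, Stmt4Aux.gmat, Matrix.adjugate_fin_two_of]
    · rw [cond_true]
      simp [hf, Stmt4Aux.gmat]
    · rw [cond_false, Matrix.SpecialLinearGroup.coe_inv]
      simp [hf, Stmt4Aux.gmat, Matrix.adjugate_fin_two_of]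
    · rw [cond_true]
      simp [hf, Stmt4Aux.gmat]
  have hprod : ((FreeGroup.lift f a : Matrix.SpecialLinearGroup (Fin 2) ℝ) :
      Matrix (Fin 2) (Fin 2) ℝ) = ((a.toWord.map (Stmt4Aux.gmat l)).prod) := by
    conv_lhs => rw [← FreeGroup.mk_toWord (x := a)]
    rw [FreeGroup.lift_mk]
    exact Stmt4Aux.coe_prod l _ hcoe _
  rw [ha] at hprod
  have hred : ∀ L₂ x b L₃, p :: L ≠ L₂ ++ (x, b) :: (x, !b) :: L₃ := by
    intro L₂ x b L₃ h
    exact FreeGroup.reduce.not (L₁ := a.toWord)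
      (by rw [FreeGroup.reduce_toWord, hPL, h])
  have K := Stmt4Aux.key l hl L p hred
  have h1 : (List.map (Stmt4Aux.gmat l) (p :: L)).prod = 1 := by
    rw [← hPL, ← hprod]; simp
  rw [h1, Matrix.one_mulVec] at K
  rcases e : ((p :: L).getLast (List.cons_ne_nil _ _)) with ⟨qb, qs⟩
  rw [e] at K
  obtain ⟨pb, ps⟩ := p
  cases pb <;> cases qb <;>
    simp only [Stmt4Aux.Inv, Stmt4Aux.startVec, Matrix.cons_val_zero,
      Matrix.cons_val_one, Matrix.head_cons, abs_zero, abs_one] at K <;>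
    obtain ⟨K1, K2, K3⟩ := K <;> linarith
end

section
/- The complex number ζ = (1/4)(3 − √5 + i·√(2(1 + 3√5))) has absolute value 1 but is not a root of unity. -/
open Complex Polynomial goldenRatio

/-! If `zⁿ = 1`, then `z⁻¹ = conj z`, so `w = z + z⁻¹ = 2 re z = ψ + 1 = (3 - √5)/2` is a root of
`Dₙ - 2`, where `Dₙ ∈ ℚ[X]` is the Dickson polynomial with `Dₙ(x + x⁻¹) = xⁿ + x⁻ⁿ`. As `w` is
irrational with minimal polynomial `X² - 3X + 1`, its conjugate `φ + 1 = (3 + √5)/2` is a root of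
`Dₙ - 2` too. But `φ + 1 > 2` is `s + s⁻¹` for a real `s > 1`, so `Dₙ(φ + 1) = sⁿ + s⁻ⁿ > 2`. -/

lemma minpoly_eq_of_natDegree_eq_two {K L : Type*} [Field K] [Field L] [Algebra K L] {x : L}
    {q : K[X]} (hq : q.Monic) (hdeg : q.natDegree = 2) (hx : aeval x q = 0)
    (hxK : x ∉ (algebraMap K L).range) : minpoly K x = q := by
  have hint : IsIntegral K x := ⟨q, hq, hx⟩
  refine (eq_of_monic_of_dvd_of_natDegree_le (minpoly.monic hint) hq (minpoly.dvd K x hx) ?_).symm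
  exact hdeg ▸ (minpoly.two_le_natDegree_iff hint).2 hxK

lemma aeval_dickson {R A : Type*} [CommRing R] [CommRing A] [Algebra R A] (k : ℕ) (a : R)
    (n : ℕ) (x : A) : aeval x (dickson k a n) = (dickson k (algebraMap R A a) n).eval x := by
  rw [aeval_def, eval₂_eq_eval_map, map_dickson]

lemma dickson_one_one_eval_add_inv_of_pow_eq_one {K : Type*} [Field K] {z : K} {n : ℕ}
    (hz0 : z ≠ 0) (hz : z ^ n = 1) : (dickson 1 (1 : K) n).eval (z + z⁻¹) = 2 := by
  rw [dickson_one_one_eval_add_inv z z⁻¹ (mul_inv_cancel₀ hz0), inv_pow, hz, inv_one,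
    one_add_one_eq_two]

lemma two_lt_add_inv_self {t : ℝ} (ht : 1 < t) : 2 < t + t⁻¹ := by
  have ht0 : 0 < t := by linarith
  have : t * t⁻¹ = 1 := mul_inv_cancel₀ ht0.ne'
  nlinarith [inv_pos.2 ht0]

lemma two_lt_dickson_one_one_eval {r : ℝ} (hr : 2 < r) {n : ℕ} (hn : n ≠ 0) :
    2 < (dickson 1 (1 : ℝ) n).eval r := by
  -- the larger root of `X² - rX + 1`
  set s := (r + √(r ^ 2 - 4)) / 2 with hs_def
  have hsq : √(r ^ 2 - 4) ^ 2 = r ^ 2 - 4 := Real.sq_sqrt (by nlinarith)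
  have hs : 1 < s := by have := Real.sqrt_nonneg (r ^ 2 - 4); rw [hs_def]; linarith
  have hrs : s * (r - s) = 1 := by linear_combination (-1 / 4 : ℝ) * hsq
  have hinv : r - s = s⁻¹ := eq_inv_of_mul_eq_one_right hrs
  rw [show r = s + (r - s) by ring, dickson_one_one_eval_add_inv s (r - s) hrs, hinv, inv_pow]
  exact two_lt_add_inv_self (one_lt_pow₀ hs hn)

lemma minpoly_goldenConj_add_one : minpoly ℚ (ψ + 1) = X ^ 2 - 3 * X + 1 := by
  refine minpoly_eq_of_natDegree_eq_two (by monicity!) (by compute_degree!) ?_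
    fun ⟨q, hq⟩ ↦ Real.goldenConj_irrational.add_natCast 1 ⟨q, by simpa using hq⟩
  simp only [map_add, map_sub, map_pow, map_mul, aeval_X, map_ofNat, map_one]
  linear_combination Real.goldenConj_sq

lemma aeval_goldenRatio_add_one_eq_zero {p : ℚ[X]} (hp : aeval (ψ + 1) p = 0) :
    aeval (φ + 1) p = 0 := by
  refine aeval_eq_zero_of_dvd_aeval_eq_zero (minpoly.dvd ℚ (ψ + 1) hp) ?_
  rw [minpoly_goldenConj_add_one]
  simp only [map_add, map_sub, map_pow, map_mul, aeval_X, map_ofNat, map_one]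
  linear_combination Real.goldenRatio_sq

theorem stmt_13 (z : ℂ)
    (hz : z = (1 / 4 : ℂ) *
      (3 - Real.sqrt 5 + Complex.I * Real.sqrt (2 * (1 + 3 * Real.sqrt 5)))) :
    ‖z‖ = 1 ∧ ∀ n : ℕ, 0 < n → z ^ n ≠ 1 := by
  have hz' : z = ((3 - √5) / 4 : ℝ) + (√(2 * (1 + 3 * √5)) / 4 : ℝ) * I := by
    rw [hz]; push_cast; ring
  have hnorm : ‖z‖ = 1 := by
    have h5 : √5 ^ 2 = 5 := Real.sq_sqrt (by norm_num)
    have h : √(2 * (1 + 3 * √5)) ^ 2 = 2 * (1 + 3 * √5) := Real.sq_sqrt (by positivity)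
    rw [hz', norm_add_mul_I, Real.sqrt_eq_one]
    linear_combination (1 / 16 : ℝ) * h + (1 / 16 : ℝ) * h5
  refine ⟨hnorm, fun n hn hzn ↦ ?_⟩
  have hw : z + z⁻¹ = ((ψ + 1 : ℝ) : ℂ) := by
    rw [inv_eq_conj hnorm, add_conj, hz', add_re, ofReal_re, re_ofReal_mul, I_re, mul_zero,
      add_zero, Real.goldenConj]
    push_cast; ring
  have hψ : aeval (ψ + 1) (dickson 1 (1 : ℚ) n - 2) = 0 := by
    have hz0 : z ≠ 0 := norm_ne_zero_iff.1 (hnorm ▸ one_ne_zero)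
    have := dickson_one_one_eval_add_inv_of_pow_eq_one hz0 hzn
    rw [hw, ← map_one (algebraMap ℚ ℂ), ← aeval_dickson, ← coe_algebraMap,
      aeval_algebraMap_apply, coe_algebraMap] at this
    rw [map_sub, map_ofNat, sub_eq_zero]
    exact_mod_cast this
  have hφ := aeval_goldenRatio_add_one_eq_zero hψ
  rw [map_sub, map_ofNat, sub_eq_zero, aeval_dickson, map_one] at hφ
  exact (two_lt_dickson_one_one_eval (by linarith [Real.one_lt_goldenRatio]) hn.ne').ne' hφ
end

section
/- The Arf invariant Arf(q) = Σ_{i=1}^g q(x_i)q(y_i) of a quadratic refinement q of a symplectic form on a 2g-dimensional ℤ/2ℤ-vector space is independent of the choice of symplectic basis (x_i, y_i). -/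
/-!
Let `ψ = signChar`, `c ↦ (-1)^c`. In coordinates `v = ∑ aᵢ xᵢ + bᵢ yᵢ` with respect to a symplectic basis,
`q v = ∑ (aᵢ q(xᵢ) + bᵢ q(yᵢ) + aᵢ bᵢ)`, so the Gauss sum `∑_v ψ(q v)` factors into `g` sums over
`(ZMod 2)²`, each equal to `2 ψ(q(xᵢ) q(yᵢ))`. Hence `∑_v ψ(q v) = 2^g ψ(Arf q)`, and the left-hand
side does not refer to any basis.
-/

open Finset

def signChar : AddChar (ZMod 2) ℤ where
  toFun c := (-1) ^ c.val
  map_zero_eq_one' := rfl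
  map_add_eq_mul' := by decide

lemma signChar_injective : Function.Injective signChar := by decide

lemma signChar_sum {ι : Type*} (s : Finset ι) (c : ι → ZMod 2) :
    signChar (∑ i ∈ s, c i) = ∏ i ∈ s, signChar (c i) :=
  map_prod signChar.toMonoidHom (fun i => Multiplicative.ofAdd (c i)) s

lemma sum_signChar_hyperbolic (α β : ZMod 2) :
    ∑ a : ZMod 2, ∑ b : ZMod 2, signChar (a * α + b * β + a * b) = 2 * signChar (α * β) := by
  revert α β; decide

lemma sum_signChar_hyperbolic_pi {ι : Type*} [Fintype ι] [DecidableEq ι] (α β : ι → ZMod 2) :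
    ∑ a : ι → ZMod 2, ∑ b : ι → ZMod 2,
        signChar (∑ i, (a i * α i + b i * β i + a i * b i))
      = 2 ^ Fintype.card ι * signChar (∑ i, α i * β i) := by
  calc _ = ∑ p : ι → ZMod 2 × ZMod 2,
        ∏ i, signChar ((p i).1 * α i + (p i).2 * β i + (p i).1 * (p i).2) := by
        rw [← Fintype.sum_prod_type']
        refine (Fintype.sum_equiv (Equiv.arrowProdEquivProdArrow ι _ _) _ _ fun p => ?_).symm
        simp [signChar_sum]
    _ = ∏ i, ∑ a : ZMod 2, ∑ b : ZMod 2, signChar (a * α i + b * β i + a * b) := by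
        simp_rw [← Fintype.sum_prod_type']
        exact (Fintype.prod_sum fun i (p : ZMod 2 × ZMod 2) =>
          signChar (p.1 * α i + p.2 * β i + p.1 * p.2)).symm
    _ = _ := by
        simp_rw [sum_signChar_hyperbolic, prod_mul_distrib, prod_const, signChar_sum, card_univ]

def IsQuadraticRefinement {V : Type*} [AddCommGroup V] [Module (ZMod 2) V]
    (ω : V →ₗ[ZMod 2] V →ₗ[ZMod 2] ZMod 2) (q : V → ZMod 2) : Prop :=
  ∀ a b, q (a + b) = q a + q b + ω a b

namespace IsQuadraticRefinement

variable {V : Type*} [AddCommGroup V] [Module (ZMod 2) V]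
  {ω : V →ₗ[ZMod 2] V →ₗ[ZMod 2] ZMod 2} {q : V → ZMod 2}

lemma map_zero (hq : IsQuadraticRefinement ω q) : q 0 = 0 := by
  simpa using hq 0 0

lemma map_smul (hq : IsQuadraticRefinement ω q) (c : ZMod 2) (v : V) : q (c • v) = c * q v := by
  obtain rfl | rfl : c = 0 ∨ c = 1 := by revert c; decide
  · simpa using hq.map_zero
  · simp

lemma map_sum_of_isotropic (hq : IsQuadraticRefinement ω q) {ι : Type*} [DecidableEq ι]
    (s : Finset ι) (w : ι → V) (hw : ∀ i ∈ s, ∀ j ∈ s, ω (w i) (w j) = 0) :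
    q (∑ i ∈ s, w i) = ∑ i ∈ s, q (w i) := by
  induction s using Finset.induction_on with
  | empty => simpa using hq.map_zero
  | insert a s ha ih =>
    have hperp : ω (w a) (∑ i ∈ s, w i) = 0 := by
      rw [map_sum]
      exact sum_eq_zero fun i hi => hw a (mem_insert_self a s) i (mem_insert_of_mem hi)
    rw [sum_insert ha, sum_insert ha, hq, hperp, add_zero,
      ih fun i hi j hj => hw i (mem_insert_of_mem hi) j (mem_insert_of_mem hj)]

lemma map_sum_smul_of_isotropic (hq : IsQuadraticRefinement ω q) {ι : Type*} [Fintype ι]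
    (c : ι → ZMod 2) (w : ι → V) (hw : ∀ i j, ω (w i) (w j) = 0) :
    q (∑ i, c i • w i) = ∑ i, c i * q (w i) := by
  classical
  rw [hq.map_sum_of_isotropic _ _ fun i _ j _ => by simp [hw]]
  simp_rw [hq.map_smul]

lemma map_sum_smul_add_sum_smul (hq : IsQuadraticRefinement ω q) {ι : Type*} [Fintype ι]
    [DecidableEq ι] (x y : ι → V)
    (hxx : ∀ i j, ω (x i) (x j) = 0) (hyy : ∀ i j, ω (y i) (y j) = 0)
    (hxy : ∀ i j, ω (x i) (y j) = if i = j then 1 else 0) (a b : ι → ZMod 2) :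
    q (∑ i, a i • x i + ∑ i, b i • y i) = ∑ i, (a i * q (x i) + b i * q (y i) + a i * b i) := by
  have hpair : ω (∑ i, a i • x i) (∑ i, b i • y i) = ∑ i, a i * b i := by
    simp [map_sum, hxy, mul_comm]
  rw [hq, hq.map_sum_smul_of_isotropic _ _ hxx, hq.map_sum_smul_of_isotropic _ _ hyy, hpair,
    ← sum_add_distrib, ← sum_add_distrib]

lemma sum_signChar [Fintype V] (hq : IsQuadraticRefinement ω q) {ι : Type*} [Fintype ι]
    [DecidableEq ι] (x y : ι → V) (b : Module.Basis (ι ⊕ ι) (ZMod 2) V)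
    (hb : ∀ i, b (Sum.inl i) = x i ∧ b (Sum.inr i) = y i)
    (hxx : ∀ i j, ω (x i) (x j) = 0) (hyy : ∀ i j, ω (y i) (y j) = 0)
    (hxy : ∀ i j, ω (x i) (y j) = if i = j then 1 else 0) :
    ∑ v, signChar (q v) = 2 ^ Fintype.card ι * signChar (∑ i, q (x i) * q (y i)) := by
  have hcoord : ∀ c : ι ⊕ ι → ZMod 2,
      b.equivFun.symm c = ∑ i, c (Sum.inl i) • x i + ∑ i, c (Sum.inr i) • y i := fun c => by
    simp [Module.Basis.equivFun_symm_apply, Fintype.sum_sum_type, hb]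
  calc ∑ v, signChar (q v)
      = ∑ c : ι ⊕ ι → ZMod 2, signChar (q (b.equivFun.symm c)) :=
        (Fintype.sum_equiv b.equivFun.symm.toEquiv _ _ fun _ => rfl).symm
    _ = ∑ a : ι → ZMod 2, ∑ b : ι → ZMod 2,
          signChar (∑ i, (a i * q (x i) + b i * q (y i) + a i * b i)) := by
        rw [← Fintype.sum_prod_type', ← (Equiv.sumArrowEquivProdArrow ι ι _).sum_comp]
        simp_rw [hcoord, hq.map_sum_smul_add_sum_smul x y hxx hyy hxy]
        rfl
    _ = _ := sum_signChar_hyperbolic_pi _ _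

end IsQuadraticRefinement

theorem stmt_18 (g : ℕ) {V : Type*} [AddCommGroup V] [Module (ZMod 2) V]
    (ω : V →ₗ[ZMod 2] V →ₗ[ZMod 2] ZMod 2)
    (q : V → ZMod 2) (hq : ∀ a b, q (a + b) = q a + q b + ω a b)
    (x y x' y' : Fin g → V)
    (b b' : Module.Basis (Fin g ⊕ Fin g) (ZMod 2) V)
    (hb : ∀ i, b (Sum.inl i) = x i ∧ b (Sum.inr i) = y i)
    (hb' : ∀ i, b' (Sum.inl i) = x' i ∧ b' (Sum.inr i) = y' i)
    (hxx : ∀ i j, ω (x i) (x j) = 0) (hyy : ∀ i j, ω (y i) (y j) = 0)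
    (hxy : ∀ i j, ω (x i) (y j) = if i = j then 1 else 0)
    (hxx' : ∀ i j, ω (x' i) (x' j) = 0) (hyy' : ∀ i j, ω (y' i) (y' j) = 0)
    (hxy' : ∀ i j, ω (x' i) (y' j) = if i = j then 1 else 0) :
    ∑ i, q (x i) * q (y i) = ∑ i, q (x' i) * q (y' i) := by
  have hq : IsQuadraticRefinement ω q := hq
  have : Fintype V := Module.fintypeOfFintype b
  have hgauss := (hq.sum_signChar x y b hb hxx hyy hxy).symm.trans
    (hq.sum_signChar x' y' b' hb' hxx' hyy' hxy')
  exact signChar_injective (mul_left_cancel₀ (by positivity) hgauss)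
end
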